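/- Let m, n ≥ 1, 1 ≤ k ≤ min(m,n), let (p̃,q̃) = (ũ·ṽ, ũ·w̃) ∈ 𝒫ᵏ_{m,n} with ũ a greatest common divisor of degree k and cofactors ṽ, w̃, and let ε > 0 and (p,q) ∈ 𝒞_{m,n} with ‖(p−p̃, q−q̃)‖ ≤ ε. Let B : P_k → P_m × P_n be the injective linear map B(z) = (ṽ·z, w̃·z), let ξ be its operator norm, σ := min{‖B(z)‖ : z ∈ P_k, ‖z‖ = 1} > 0, and τ := ξ/σ. Suppose v, w ∈ ℂ[x] with deg v ≤ m−k, deg w ≤ n−k, μ > 0 and γ ∈ ℂ∖{0} satisfy ‖(γ·v − ṽ, γ·w − w̃)‖ ≤ μ·ε·‖(ṽ, w̃)‖, and let u ∈ P_k be a minimizer of z ↦ ‖(v·z − p, w·z − q)‖ over P_k. If η := μ·τ·√(k+1)·ε < 1, then there exists α ∈ ℂ, α ≠ 0, such that ‖ũ − α·u‖ ≤ (τ/(1−η))·(√(k+1)·‖ũ‖·μ + 1/ξ)·ε. -/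

import Mathlib

open Polynomial

/-- The squared ℓ²-norm of the coefficient sequence of a polynomial. -/
noncomputable def pnormSq (p : ℂ[X]) : ℝ := ∑ i ∈ p.support, ‖p.coeff i‖ ^ 2

/-- The ℓ²-norm of the coefficient sequence of a polynomial. -/
noncomputable def pnorm (p : ℂ[X]) : ℝ := Real.sqrt (pnormSq p)

/-- The ℓ²-norm of a pair of polynomials. -/
noncomputable def pairNorm (p q : ℂ[X]) : ℝ := Real.sqrt (pnormSq p + pnormSq q)

/-- The ℓ²-norm of a triple of polynomials. -/
noncomputable def tripleNorm (p q r : ℂ[X]) : ℝ :=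
  Real.sqrt (pnormSq p + pnormSq q + pnormSq r)

/-- The degree of the greatest common divisor of two polynomials. -/
noncomputable def gcdDeg (p q : ℂ[X]) : ℕ := (EuclideanDomain.gcd p q).natDegree

/-- The set 𝒞_{m,n} of pairs of polynomials of degrees exactly m and n. -/
def Cmn (m n : ℕ) : Set (ℂ[X] × ℂ[X]) :=
  {pq | pq.1.degree = (m : WithBot ℕ) ∧ pq.2.degree = (n : WithBot ℕ)}

/-- The GCD manifold 𝒫ᵏ_{m,n} : pairs in 𝒞_{m,n} whose GCD has degree k. -/
def Pmnk (m n k : ℕ) : Set (ℂ[X] × ℂ[X]) :=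
  {pq | pq ∈ Cmn m n ∧ gcdDeg pq.1 pq.2 = k}

/-- The distance θ_k(p,q) from (p,q) to the GCD manifold 𝒫ᵏ_{m,n}. -/
noncomputable def theta (m n k : ℕ) (p q : ℂ[X]) : ℝ :=
  sInf ((fun rs => pairNorm (p - rs.1) (q - rs.2)) '' Pmnk m n k)

/-- The bilinear Sylvester expression (w,v) ↦ p·w − q·v as a linear map. -/
noncomputable def sylMap (p q : ℂ[X]) : ℂ[X] × ℂ[X] →ₗ[ℂ] ℂ[X] :=
  (LinearMap.mulLeft ℂ p).comp (LinearMap.fst ℂ ℂ[X] ℂ[X]) -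
    (LinearMap.mulLeft ℂ q).comp (LinearMap.snd ℂ ℂ[X] ℂ[X])

/-- The domain V_j = {(w,v) : deg w ≤ n−j, deg v ≤ m−j} of the j-th Sylvester map. -/
noncomputable def Vspace (m n j : ℕ) : Submodule ℂ (ℂ[X] × ℂ[X]) :=
  (Polynomial.degreeLE ℂ ((n - j : ℕ) : WithBot ℕ)).prod
    (Polynomial.degreeLE ℂ ((m - j : ℕ) : WithBot ℕ))

noncomputable def coeffFn (N : ℕ) : ℂ[X] →ₗ[ℂ] EuclideanSpace ℂ (Fin N) where
  toFun p := WithLp.toLp 2 (fun i => p.coeff i)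
  map_add' p q := by ext i; simp
  map_smul' c p := by ext i; simp

@[simp] lemma coeffFn_apply (N : ℕ) (p : ℂ[X]) (i : Fin N) : coeffFn N p i = p.coeff i := rfl

noncomputable abbrev Hsp (N : ℕ) :=
  WithLp 2 (EuclideanSpace ℂ (Fin N) × EuclideanSpace ℂ (Fin N))

noncomputable def pairFn (N : ℕ) : ℂ[X] × ℂ[X] →ₗ[ℂ] Hsp N :=
  ((WithLp.linearEquiv 2 ℂ _).symm.toLinearMap).comp ((coeffFn N).prodMap (coeffFn N))

lemma pnormSq_nonneg (p : ℂ[X]) : 0 ≤ pnormSq p :=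
  Finset.sum_nonneg fun _ _ => by positivity

lemma pnormSq_eq_sum_range {N : ℕ} (p : ℂ[X]) (h : p.natDegree < N) :
    pnormSq p = ∑ i ∈ Finset.range N, ‖p.coeff i‖ ^ 2 := by
  apply Finset.sum_subset
  · intro i hi
    exact Finset.mem_range.mpr (lt_of_le_of_lt (le_natDegree_of_mem_supp i hi) h)
  · intro i _ hi
    rw [notMem_support_iff.mp hi]; simp

lemma pnorm_eq_norm {N : ℕ} (p : ℂ[X]) (h : p.natDegree < N) :
    pnorm p = ‖coeffFn N p‖ := by
  rw [pnorm, EuclideanSpace.norm_eq, pnormSq_eq_sum_range p h]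
  congr 1
  rw [← Fin.sum_univ_eq_sum_range (fun i => ‖p.coeff i‖ ^ 2) N]
  simp

lemma pairNorm_eq_norm {N : ℕ} (p q : ℂ[X]) (hp : p.natDegree < N) (hq : q.natDegree < N) :
    pairNorm p q = ‖pairFn N (p, q)‖ := by
  have h1 : ‖pairFn N (p, q)‖ ^ 2 = ‖coeffFn N p‖ ^ 2 + ‖coeffFn N q‖ ^ 2 :=
    WithLp.prod_norm_sq_eq_of_L2 _
  have h2 : ‖pairFn N (p, q)‖ = Real.sqrt (‖coeffFn N p‖ ^ 2 + ‖coeffFn N q‖ ^ 2) := by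
    rw [← h1, Real.sqrt_sq (norm_nonneg _)]
  rw [pairNorm, h2, ← pnorm_eq_norm p hp, ← pnorm_eq_norm q hq, pnorm, pnorm,
    Real.sq_sqrt (pnormSq_nonneg p), Real.sq_sqrt (pnormSq_nonneg q)]

lemma pnormSq_smul (c : ℂ) (p : ℂ[X]) : pnormSq (c • p) = ‖c‖ ^ 2 * pnormSq p := by
  rw [pnormSq_eq_sum_range (c • p) (lt_of_le_of_lt (natDegree_smul_le c p) (lt_add_one _)),
    pnormSq_eq_sum_range p (lt_add_one _), Finset.mul_sum]
  refine Finset.sum_congr rfl fun i _ => ?_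
  rw [coeff_smul, smul_eq_mul, norm_mul, mul_pow]

lemma pnorm_nonneg (p : ℂ[X]) : 0 ≤ pnorm p := Real.sqrt_nonneg _

lemma pnorm_smul (c : ℂ) (p : ℂ[X]) : pnorm (c • p) = ‖c‖ * pnorm p := by
  rw [pnorm, pnorm, pnormSq_smul, Real.sqrt_mul (by positivity), Real.sqrt_sq (norm_nonneg _)]

lemma pairNorm_smul (c : ℂ) (p q : ℂ[X]) : pairNorm (c • p) (c • q) = ‖c‖ * pairNorm p q := by
  rw [pairNorm, pairNorm, pnormSq_smul, pnormSq_smul, ← mul_add,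
    Real.sqrt_mul (by positivity), Real.sqrt_sq (norm_nonneg _)]

lemma pairNorm_neg (p q : ℂ[X]) : pairNorm (-p) (-q) = pairNorm p q := by
  have := pairNorm_smul (-1) p q
  simpa using this

lemma pairNorm_nonneg (p q : ℂ[X]) : 0 ≤ pairNorm p q := Real.sqrt_nonneg _

lemma pnorm_one : pnorm (1 : ℂ[X]) = 1 := by
  have : pnormSq (1 : ℂ[X]) = 1 := by
    rw [pnormSq_eq_sum_range (N := 1) (1 : ℂ[X]) (by simp)]
    simp
  rw [pnorm, this, Real.sqrt_one]

lemma pnorm_pos {p : ℂ[X]} (hp : p ≠ 0) : 0 < pnorm p := by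
  rw [pnorm, Real.sqrt_pos]
  refine Finset.sum_pos (fun i hi => ?_) (support_nonempty.mpr hp)
  have h := mem_support_iff.mp hi
  exact pow_pos (norm_pos_iff.mpr h) 2

lemma pnormSq_mul_X_pow (f : ℂ[X]) (j : ℕ) : pnormSq (f * X ^ j) = pnormSq f := by
  by_cases hf : f = 0
  · simp [hf]
  have h1 : (f * X ^ j).natDegree < j + (f.natDegree + 1) := by
    have := natDegree_mul_le (p := f) (q := (X : ℂ[X]) ^ j)
    simp only [natDegree_X_pow] at this
    omega
  rw [pnormSq_eq_sum_range _ h1, pnormSq_eq_sum_range f (lt_add_one _)]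
  rw [Finset.range_eq_Ico, ← Finset.sum_Ico_consecutive _ (Nat.zero_le j) (Nat.le_add_right j _)]
  have hz : ∑ i ∈ Finset.Ico 0 j, ‖(f * X ^ j).coeff i‖ ^ 2 = 0 := by
    refine Finset.sum_eq_zero fun i hi => ?_
    rw [coeff_mul_X_pow', if_neg (by simp at hi; omega)]
    simp
  rw [hz, zero_add, Finset.sum_Ico_eq_sum_range]
  simp only [Nat.add_sub_cancel_left]
  refine Finset.sum_congr rfl fun i _ => ?_
  rw [coeff_mul_X_pow', if_pos (Nat.le_add_right j i)]
  simp

lemma pairNorm_mul_X_pow (f g : ℂ[X]) (j : ℕ) :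
    pairNorm (f * X ^ j) (g * X ^ j) = pairNorm f g := by
  rw [pairNorm, pairNorm, pnormSq_mul_X_pow, pnormSq_mul_X_pow]

lemma sum_abs_coeff_le (a : ℂ[X]) (k : ℕ) (ha : a.natDegree ≤ k) :
    ∑ j ∈ Finset.range (k + 1), ‖a.coeff j‖ ≤ Real.sqrt ((k : ℝ) + 1) * pnorm a := by
  have hcs : (∑ j ∈ Finset.range (k + 1), ‖a.coeff j‖) ^ 2 ≤
      ((k : ℝ) + 1) * ∑ j ∈ Finset.range (k + 1), ‖a.coeff j‖ ^ 2 := by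
    have := sq_sum_le_card_mul_sum_sq (s := Finset.range (k + 1)) (f := fun j => ‖a.coeff j‖)
    simpa using this
  have h1 : ∑ j ∈ Finset.range (k + 1), ‖a.coeff j‖ ≤
      Real.sqrt (((k : ℝ) + 1) * ∑ j ∈ Finset.range (k + 1), ‖a.coeff j‖ ^ 2) :=
    Real.le_sqrt_of_sq_le (by exact hcs)
  calc ∑ j ∈ Finset.range (k + 1), ‖a.coeff j‖ ≤ _ := h1
    _ = Real.sqrt ((k : ℝ) + 1) * pnorm a := by
        rw [Real.sqrt_mul (by positivity), pnorm,
          pnormSq_eq_sum_range a (Nat.lt_succ_of_le ha)]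

lemma pairNorm_add_le (f₁ f₂ g₁ g₂ : ℂ[X]) :
    pairNorm (f₁ + g₁) (f₂ + g₂) ≤ pairNorm f₁ f₂ + pairNorm g₁ g₂ := by
  set N := (f₁.natDegree ⊔ f₂.natDegree ⊔ g₁.natDegree ⊔ g₂.natDegree) + 1 with hN
  have hf₁ : f₁.natDegree < N := by omega
  have hf₂ : f₂.natDegree < N := by omega
  have hg₁ : g₁.natDegree < N := by omega
  have hg₂ : g₂.natDegree < N := by omega
  have hfg₁ : (f₁ + g₁).natDegree < N :=
    lt_of_le_of_lt (natDegree_add_le _ _) (by omega)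
  have hfg₂ : (f₂ + g₂).natDegree < N :=
    lt_of_le_of_lt (natDegree_add_le _ _) (by omega)
  rw [pairNorm_eq_norm _ _ hfg₁ hfg₂, pairNorm_eq_norm _ _ hf₁ hf₂,
    pairNorm_eq_norm _ _ hg₁ hg₂]
  have : ((f₁ + g₁, f₂ + g₂) : ℂ[X] × ℂ[X]) = (f₁, f₂) + (g₁, g₂) := rfl
  rw [this, map_add]
  exact norm_add_le _ _

lemma poly_mul_expand (f a : ℂ[X]) (k : ℕ) (ha : a.natDegree ≤ k) :
    f * a = ∑ j ∈ Finset.range (k + 1), a.coeff j • (f * X ^ j) := by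
  conv_lhs => rw [a.as_sum_range' (k + 1) (Nat.lt_succ_of_le ha)]
  rw [Finset.mul_sum]
  refine Finset.sum_congr rfl fun j _ => ?_
  rw [← smul_X_eq_monomial, mul_smul_comm]

lemma pair_mul_le (f g a : ℂ[X]) (k : ℕ) (ha : a.natDegree ≤ k) :
    pairNorm (f * a) (g * a) ≤ Real.sqrt ((k : ℝ) + 1) * pnorm a * pairNorm f g := by
  set N := (f.natDegree ⊔ g.natDegree) + k + 1 with hN
  have hfj : ∀ j ∈ Finset.range (k + 1), (f * X ^ j).natDegree < N := by
    intro j hj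
    simp only [Finset.mem_range] at hj
    refine lt_of_le_of_lt natDegree_mul_le ?_
    simp only [natDegree_X_pow]; omega
  have hgj : ∀ j ∈ Finset.range (k + 1), (g * X ^ j).natDegree < N := by
    intro j hj
    simp only [Finset.mem_range] at hj
    refine lt_of_le_of_lt natDegree_mul_le ?_
    simp only [natDegree_X_pow]; omega
  have hfa : (f * a).natDegree < N := lt_of_le_of_lt natDegree_mul_le (by omega)
  have hga : (g * a).natDegree < N := lt_of_le_of_lt natDegree_mul_le (by omega)
  have key : ((f * a, g * a) : ℂ[X] × ℂ[X]) =
      ∑ j ∈ Finset.range (k + 1), a.coeff j • ((f * X ^ j, g * X ^ j) : ℂ[X] × ℂ[X]) := by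
    rw [Prod.ext_iff, Prod.fst_sum, Prod.snd_sum]
    constructor
    · simpa using poly_mul_expand f a k ha
    · simpa using poly_mul_expand g a k ha
  rw [pairNorm_eq_norm _ _ hfa hga, key, map_sum]
  calc ‖∑ j ∈ Finset.range (k + 1), pairFn N (a.coeff j • (f * X ^ j, g * X ^ j))‖
      ≤ ∑ j ∈ Finset.range (k + 1), ‖pairFn N (a.coeff j • (f * X ^ j, g * X ^ j))‖ :=
        norm_sum_le _ _
    _ = ∑ j ∈ Finset.range (k + 1), ‖a.coeff j‖ * pairNorm f g := by
        refine Finset.sum_congr rfl fun j hj => ?_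
        rw [map_smul, norm_smul, ← pairNorm_eq_norm _ _ (hfj j hj) (hgj j hj),
          pairNorm_mul_X_pow]
    _ = (∑ j ∈ Finset.range (k + 1), ‖a.coeff j‖) * pairNorm f g := by
        rw [Finset.sum_mul]
    _ ≤ Real.sqrt ((k : ℝ) + 1) * pnorm a * pairNorm f g :=
        mul_le_mul_of_nonneg_right (sum_abs_coeff_le a k ha) (pairNorm_nonneg f g)

lemma inner_eq_zero_of_min {E : Type*} [NormedAddCommGroup E] [InnerProductSpace ℂ E]
    (a b : E) (h : ∀ t : ℂ, ‖a‖ ≤ ‖a + t • b‖) : (inner ℂ a b : ℂ) = 0 := by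
  by_cases hb : b = 0
  · simp [hb]
  have hbn : (0 : ℝ) < ‖b‖ ^ 2 := pow_pos (norm_pos_iff.mpr hb) 2
  set c : ℂ := inner ℂ a b with hc
  set t : ℂ := -(starRingEnd ℂ c) / ((‖b‖ ^ 2 : ℝ) : ℂ) with ht
  have h2 : ‖a‖ ^ 2 ≤ ‖a + t • b‖ ^ 2 := by
    have := h t; nlinarith [norm_nonneg a, norm_nonneg (a + t • b)]
  rw [norm_add_sq (𝕜 := ℂ)] at h2
  have h3 : (inner ℂ a (t • b) : ℂ) = ((-(‖c‖ ^ 2 / ‖b‖ ^ 2) : ℝ) : ℂ) := by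
    rw [inner_smul_right, ← hc, ht, div_mul_eq_mul_div, neg_mul,
      mul_comm ((starRingEnd ℂ) c) c, Complex.mul_conj, Complex.normSq_eq_norm_sq]
    push_cast
    ring
  have h4 : RCLike.re (inner ℂ a (t • b) : ℂ) = -(‖c‖ ^ 2 / ‖b‖ ^ 2) := by
    rw [h3]; norm_cast
  have h5 : ‖t • b‖ ^ 2 = ‖c‖ ^ 2 / ‖b‖ ^ 2 := by
    rw [norm_smul, mul_pow, ht, norm_div, norm_neg, RCLike.norm_conj, Complex.norm_real,
      Real.norm_eq_abs, abs_of_nonneg (le_of_lt hbn)]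
    field_simp
  rw [h4, h5] at h2
  have h7 : ‖c‖ ^ 2 ≤ 0 := by
    by_contra h8
    push_neg at h8
    have := div_pos h8 hbn
    linarith
  have h9 : ‖c‖ = 0 := by nlinarith [norm_nonneg c]
  exact norm_eq_zero.mp h9

/-- Error bound for the initial GCD approximation obtained from the least squares
solution of the cofactor system. -/
theorem initial_gcd_error (m n k : ℕ) (hm : 1 ≤ m) (hn : 1 ≤ n)
    (hk1 : 1 ≤ k) (hk : k ≤ min m n)
    (ut vt wt : ℂ[X]) (hut : ut.degree = (k : WithBot ℕ))
    (hmem : (ut * vt, ut * wt) ∈ Pmnk m n k)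
    (hgcd : ∀ d : ℂ[X], d ∣ ut * vt → d ∣ ut * wt → d ∣ ut)
    (ε : ℝ) (hε : 0 < ε)
    (p q : ℂ[X]) (hpq : (p, q) ∈ Cmn m n)
    (hclose : pairNorm (p - ut * vt) (q - ut * wt) ≤ ε)
    (ξ σ τ : ℝ)
    (hξ : ξ = sSup {r : ℝ | ∃ z : ℂ[X], z.degree ≤ (k : WithBot ℕ) ∧ pnorm z = 1 ∧
        r = pairNorm (vt * z) (wt * z)})
    (hσ : σ = sInf {r : ℝ | ∃ z : ℂ[X], z.degree ≤ (k : WithBot ℕ) ∧ pnorm z = 1 ∧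
        r = pairNorm (vt * z) (wt * z)})
    (hσpos : 0 < σ) (hτ : τ = ξ / σ)
    (v w : ℂ[X]) (hv : v.degree ≤ ((m - k : ℕ) : WithBot ℕ))
    (hw : w.degree ≤ ((n - k : ℕ) : WithBot ℕ))
    (μ : ℝ) (hμ : 0 < μ) (γ : ℂ) (hγ : γ ≠ 0)
    (hpert : pairNorm (γ • v - vt) (γ • w - wt) ≤ μ * ε * pairNorm vt wt)
    (u : ℂ[X]) (hu : u.degree ≤ (k : WithBot ℕ))
    (humin : ∀ z : ℂ[X], z.degree ≤ (k : WithBot ℕ) →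
      pairNorm (v * u - p) (w * u - q) ≤ pairNorm (v * z - p) (w * z - q))
    (η : ℝ) (hη : η = μ * τ * Real.sqrt ((k : ℝ) + 1) * ε) (hη1 : η < 1) :
    ∃ α : ℂ, α ≠ 0 ∧
      pnorm (ut - α • u) ≤
        (τ / (1 - η)) * (Real.sqrt ((k : ℝ) + 1) * pnorm ut * μ + 1 / ξ) * ε := by
  classical
  have hkm : k ≤ m := hk.trans (min_le_left m n)
  have hkn : k ≤ n := hk.trans (min_le_right m n)
  have hutnd : ut.natDegree = k := natDegree_eq_of_degree_eq_some hut
  have hpvt : (ut * vt).degree = (m : WithBot ℕ) := hmem.1.1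
  have hqwt : (ut * wt).degree = (n : WithBot ℕ) := hmem.1.2
  have hpvt0 : ut * vt ≠ 0 := by
    intro h0; rw [h0, degree_zero] at hpvt; exact absurd hpvt (by simp)
  have hqwt0 : ut * wt ≠ 0 := by
    intro h0; rw [h0, degree_zero] at hqwt; exact absurd hqwt (by simp)
  have hvtnd : vt.natDegree ≤ m := by
    have h1 := natDegree_le_of_dvd (dvd_mul_left vt ut) hpvt0
    rwa [natDegree_eq_of_degree_eq_some hpvt] at h1
  have hwtnd : wt.natDegree ≤ n := by
    have h1 := natDegree_le_of_dvd (dvd_mul_left wt ut) hqwt0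
    rwa [natDegree_eq_of_degree_eq_some hqwt] at h1
  have hund : u.natDegree ≤ k := natDegree_le_iff_degree_le.mpr hu
  have hvnd : v.natDegree ≤ m := le_trans (natDegree_le_iff_degree_le.mpr hv) (by omega)
  have hwnd : w.natDegree ≤ n := le_trans (natDegree_le_iff_degree_le.mpr hw) (by omega)
  have hpnd : p.natDegree = m := natDegree_eq_of_degree_eq_some hpq.1
  have hqnd : q.natDegree = n := natDegree_eq_of_degree_eq_some hpq.2
  -- S facts
  set S := {r : ℝ | ∃ z : ℂ[X], z.degree ≤ (k : WithBot ℕ) ∧ pnorm z = 1 ∧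
      r = pairNorm (vt * z) (wt * z)} with hS
  have hSbddAbove : BddAbove S := by
    refine ⟨Real.sqrt ((k : ℝ) + 1) * pairNorm vt wt, ?_⟩
    rintro r ⟨z, hzdeg, hz1, rfl⟩
    have h1 := pair_mul_le vt wt z k (natDegree_le_iff_degree_le.mpr hzdeg)
    rwa [hz1, mul_one] at h1
  have hSbddBelow : BddBelow S := by
    refine ⟨0, ?_⟩; rintro r ⟨z, _, _, rfl⟩; exact pairNorm_nonneg _ _
  have h1S : pairNorm vt wt ∈ S := by
    refine ⟨1, ?_, pnorm_one, by rw [mul_one, mul_one]⟩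
    rw [degree_one]; exact_mod_cast Nat.zero_le k
  have hξge : pairNorm vt wt ≤ ξ := hξ ▸ le_csSup hSbddAbove h1S
  have hσle : ∀ d : ℂ[X], d.degree ≤ (k : WithBot ℕ) →
      σ * pnorm d ≤ pairNorm (vt * d) (wt * d) := by
    intro d hd
    by_cases hd0 : d = 0
    · simp [hd0, pnorm, pairNorm, pnormSq, Polynomial.support_zero]
    · have hpd : 0 < pnorm d := pnorm_pos hd0
      set z : ℂ[X] := (((pnorm d : ℝ) : ℂ))⁻¹ • d with hzdef
      have hz1 : pnorm z = 1 := by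
        rw [hzdef, pnorm_smul, norm_inv, Complex.norm_real, Real.norm_eq_abs,
          abs_of_pos hpd, inv_mul_cancel₀ (ne_of_gt hpd)]
      have hzdeg : z.degree ≤ (k : WithBot ℕ) := le_trans (degree_smul_le _ _) hd
      have hzS : pairNorm (vt * z) (wt * z) ∈ S := ⟨z, hzdeg, hz1, rfl⟩
      have h2 : σ ≤ pairNorm (vt * z) (wt * z) := hσ ▸ csInf_le hSbddBelow hzS
      have h3 : pairNorm (vt * z) (wt * z) = (pnorm d)⁻¹ * pairNorm (vt * d) (wt * d) := by
        rw [hzdef, mul_smul_comm, mul_smul_comm, pairNorm_smul, norm_inv, Complex.norm_real,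
          Real.norm_eq_abs, abs_of_pos hpd]
      rw [h3] at h2
      calc σ * pnorm d ≤ ((pnorm d)⁻¹ * pairNorm (vt * d) (wt * d)) * pnorm d :=
            mul_le_mul_of_nonneg_right h2 (pnorm_nonneg d)
        _ = pairNorm (vt * d) (wt * d) := by field_simp
  have hσξ : σ ≤ pairNorm vt wt := by
    have h := hσle 1 (by rw [degree_one]; exact_mod_cast Nat.zero_le k)
    simpa [pnorm_one] using h
  have hξpos : 0 < ξ := lt_of_lt_of_le hσpos (hσξ.trans hξge)
  have hσne : σ ≠ 0 := ne_of_gt hσpos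
  have hξne : ξ ≠ 0 := ne_of_gt hξpos
  have h1η : 0 < 1 - η := by linarith
  have h1ηne : (1 : ℝ) - η ≠ 0 := ne_of_gt h1η
  -- main objects
  set d := ut - γ⁻¹ • u with hd
  set z' := γ • ut - u with hz'
  have hz'd : z' = γ • d := by
    rw [hz', hd, smul_sub, smul_smul, mul_inv_cancel₀ hγ, one_smul]
  have hddeg : d.degree ≤ (k : WithBot ℕ) := by
    rw [hd]
    exact le_trans (degree_sub_le _ _) (max_le hut.le (le_trans (degree_smul_le _ _) hu))
  have hz'deg : z'.degree ≤ (k : WithBot ℕ) := by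
    rw [hz']
    exact le_trans (degree_sub_le _ _) (max_le (le_trans (degree_smul_le _ _) hut.le) hu)
  have hdnd : d.natDegree ≤ k := natDegree_le_iff_degree_le.mpr hddeg
  have hz'nd : z'.natDegree ≤ k := natDegree_le_iff_degree_le.mpr hz'deg
  have hconv : ∀ f g : ℂ[X], f.natDegree ≤ m + n + k + 1 → g.natDegree ≤ m + n + k + 1 →
      pairNorm f g = ‖pairFn (m + n + k + 2) (f, g)‖ := fun f g hf hg =>
    pairNorm_eq_norm f g (by omega) (by omega)
  have hbound : ∀ zz : ℂ[X], zz.natDegree ≤ k →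
      (v * zz - p).natDegree ≤ m + n + k + 1 ∧ (w * zz - q).natDegree ≤ m + n + k + 1 := by
    intro zz hzz
    constructor
    · refine le_trans (natDegree_sub_le _ _) (max_le (le_trans natDegree_mul_le ?_) ?_) <;> omega
    · refine le_trans (natDegree_sub_le _ _) (max_le (le_trans natDegree_mul_le ?_) ?_) <;> omega
  -- orthogonality
  have horth : ∀ z : ℂ[X], z.degree ≤ (k : WithBot ℕ) →
      (inner ℂ (pairFn (m + n + k + 2) (v * u - p, w * u - q))
        (pairFn (m + n + k + 2) (v * z, w * z)) : ℂ) = 0 := by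
    intro z hz
    have hznd : z.natDegree ≤ k := natDegree_le_iff_degree_le.mpr hz
    apply inner_eq_zero_of_min
    intro t
    have hdeg2 : (u + t • z).degree ≤ (k : WithBot ℕ) :=
      le_trans (degree_add_le _ _) (max_le hu (le_trans (degree_smul_le _ _) hz))
    have heq : pairFn (m + n + k + 2) (v * u - p, w * u - q) +
        t • pairFn (m + n + k + 2) (v * z, w * z) =
        pairFn (m + n + k + 2) (v * (u + t • z) - p, w * (u + t • z) - q) := by
      rw [← map_smul, ← map_add]
      congr 1
      rw [Prod.ext_iff]
      constructor
      · show v * u - p + t • (v * z) = v * (u + t • z) - p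
        rw [mul_add, mul_smul_comm]; abel
      · show w * u - q + t • (w * z) = w * (u + t • z) - q
        rw [mul_add, mul_smul_comm]; abel
    rw [heq]
    obtain ⟨hb1, hb2⟩ := hbound u hund
    obtain ⟨hb3, hb4⟩ := hbound (u + t • z) (natDegree_le_iff_degree_le.mpr hdeg2)
    rw [← hconv _ _ hb1 hb2, ← hconv _ _ hb3 hb4]
    exact humin _ hdeg2
  -- Pythagoras
  have hz'b1 : (v * z').natDegree ≤ m + n + k + 1 := le_trans natDegree_mul_le (by omega)
  have hz'b2 : (w * z').natDegree ≤ m + n + k + 1 := le_trans natDegree_mul_le (by omega)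
  have hγutnd : (γ • ut).natDegree ≤ k := le_trans (natDegree_smul_le _ _) hutnd.le
  have hpyth : pairNorm (v * z') (w * z') ≤
      pairNorm (v * (γ • ut) - p) (w * (γ • ut) - q) := by
    set A := pairFn (m + n + k + 2) (v * u - p, w * u - q) with hA
    set Cc := pairFn (m + n + k + 2) (v * z', w * z') with hC
    have hip : (inner ℂ A Cc : ℂ) = 0 := horth z' hz'deg
    have hsum : A + Cc = pairFn (m + n + k + 2) (v * (γ • ut) - p, w * (γ • ut) - q) := by
      rw [hA, hC, ← map_add]
      congr 1
      have huz : u + z' = γ • ut := by rw [hz']; abel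
      rw [Prod.ext_iff]
      constructor
      · show v * u - p + v * z' = v * (γ • ut) - p
        rw [← huz, mul_add]; abel
      · show w * u - q + w * z' = w * (γ • ut) - q
        rw [← huz, mul_add]; abel
    have hsq : ‖A + Cc‖ ^ 2 = ‖A‖ ^ 2 + ‖Cc‖ ^ 2 := by
      rw [norm_add_sq (𝕜 := ℂ), hip]; simp
    have h8 : ‖Cc‖ ≤ ‖A + Cc‖ := by
      have h9 : ‖Cc‖ ^ 2 ≤ ‖A + Cc‖ ^ 2 := by nlinarith [norm_nonneg A]
      have h10 := Real.sqrt_le_sqrt h9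
      rwa [Real.sqrt_sq (norm_nonneg _), Real.sqrt_sq (norm_nonneg _)] at h10
    obtain ⟨hb5, hb6⟩ := hbound (γ • ut) hγutnd
    calc pairNorm (v * z') (w * z') = ‖Cc‖ := hconv _ _ hz'b1 hz'b2
      _ ≤ ‖A + Cc‖ := h8
      _ = pairNorm (v * (γ • ut) - p) (w * (γ • ut) - q) := by
          rw [hsum]; exact (hconv _ _ hb5 hb6).symm
  -- triangle splits
  have e1 : vt * d = v * z' + (vt - γ • v) * d := by
    rw [hz'd, mul_smul_comm, sub_mul, smul_mul_assoc]; abel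
  have e1' : wt * d = w * z' + (wt - γ • w) * d := by
    rw [hz'd, mul_smul_comm, sub_mul, smul_mul_assoc]; abel
  have step2 : pairNorm (vt * d) (wt * d) ≤
      pairNorm (v * z') (w * z') + pairNorm ((vt - γ • v) * d) ((wt - γ • w) * d) := by
    rw [e1, e1']; exact pairNorm_add_le _ _ _ _
  have hpertneg : pairNorm (vt - γ • v) (wt - γ • w) ≤ μ * ε * pairNorm vt wt := by
    rw [← neg_sub (γ • v) vt, ← neg_sub (γ • w) wt, pairNorm_neg]
    exact hpert
  have step3 : pairNorm ((vt - γ • v) * d) ((wt - γ • w) * d) ≤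
      Real.sqrt ((k : ℝ) + 1) * pnorm d * (μ * ε * pairNorm vt wt) :=
    le_trans (pair_mul_le _ _ d k hdnd)
      (mul_le_mul_of_nonneg_left hpertneg
        (mul_nonneg (Real.sqrt_nonneg _) (pnorm_nonneg _)))
  have hησ : Real.sqrt ((k : ℝ) + 1) * (μ * ε * ξ) = η * σ := by
    rw [hη, hτ]; field_simp
  have step3' : pairNorm ((vt - γ • v) * d) ((wt - γ • w) * d) ≤ η * σ * pnorm d := by
    calc pairNorm ((vt - γ • v) * d) ((wt - γ • w) * d) ≤
        Real.sqrt ((k : ℝ) + 1) * pnorm d * (μ * ε * pairNorm vt wt) := step3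
      _ ≤ Real.sqrt ((k : ℝ) + 1) * pnorm d * (μ * ε * ξ) := by
          refine mul_le_mul_of_nonneg_left ?_
            (mul_nonneg (Real.sqrt_nonneg _) (pnorm_nonneg _))
          exact mul_le_mul_of_nonneg_left hξge (by positivity)
      _ = η * σ * pnorm d := by rw [← hησ]; ring
  have e2 : v * (γ • ut) - p = (γ • v - vt) * ut + (ut * vt - p) := by
    rw [mul_smul_comm, sub_mul, smul_mul_assoc, mul_comm ut vt]; abel
  have e2' : w * (γ • ut) - q = (γ • w - wt) * ut + (ut * wt - q) := by
    rw [mul_smul_comm, sub_mul, smul_mul_assoc, mul_comm ut wt]; abel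
  have step5 : pairNorm (v * (γ • ut) - p) (w * (γ • ut) - q) ≤
      pairNorm ((γ • v - vt) * ut) ((γ • w - wt) * ut) +
        pairNorm (ut * vt - p) (ut * wt - q) := by
    rw [e2, e2']; exact pairNorm_add_le _ _ _ _
  have step6 : pairNorm ((γ • v - vt) * ut) ((γ • w - wt) * ut) ≤
      Real.sqrt ((k : ℝ) + 1) * pnorm ut * (μ * ε * ξ) := by
    calc pairNorm ((γ • v - vt) * ut) ((γ • w - wt) * ut) ≤
        Real.sqrt ((k : ℝ) + 1) * pnorm ut * pairNorm (γ • v - vt) (γ • w - wt) :=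
          pair_mul_le _ _ ut k hutnd.le
      _ ≤ Real.sqrt ((k : ℝ) + 1) * pnorm ut * (μ * ε * pairNorm vt wt) :=
          mul_le_mul_of_nonneg_left hpert
            (mul_nonneg (Real.sqrt_nonneg _) (pnorm_nonneg _))
      _ ≤ Real.sqrt ((k : ℝ) + 1) * pnorm ut * (μ * ε * ξ) :=
          mul_le_mul_of_nonneg_left (mul_le_mul_of_nonneg_left hξge (by positivity))
            (mul_nonneg (Real.sqrt_nonneg _) (pnorm_nonneg _))
  have step7 : pairNorm (ut * vt - p) (ut * wt - q) ≤ ε := by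
    rw [← neg_sub p (ut * vt), ← neg_sub q (ut * wt), pairNorm_neg]
    exact hclose
  -- combine
  have main : σ * pnorm d ≤ η * σ * pnorm d +
      (Real.sqrt ((k : ℝ) + 1) * pnorm ut * (μ * ε * ξ) + ε) := by
    have c1 := hσle d hddeg
    linarith [step2, step3', hpyth, step5, step6, step7]
  refine ⟨γ⁻¹, inv_ne_zero hγ, ?_⟩
  rw [← hd]
  have hR : σ * (1 - η) * ((τ / (1 - η)) *
      (Real.sqrt ((k : ℝ) + 1) * pnorm ut * μ + 1 / ξ) * ε) =
      Real.sqrt ((k : ℝ) + 1) * pnorm ut * (μ * ε * ξ) + ε := by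
    rw [hτ]; field_simp
  have expand : σ * (1 - η) * pnorm d = σ * pnorm d - η * σ * pnorm d := by ring
  have hD : σ * (1 - η) * pnorm d ≤ σ * (1 - η) * ((τ / (1 - η)) *
      (Real.sqrt ((k : ℝ) + 1) * pnorm ut * μ + 1 / ξ) * ε) := by
    rw [expand, hR]; linarith [main]
  exact (mul_le_mul_iff_right₀ (mul_pos hσpos h1η)).mp hD
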